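/- arXiv:1206.5669 — 2 statements merged into one kernel-verified Lean document; each statement's English description precedes it below -/
import Mathlib

section
/- For every integer n ≥ 3 and every 2-coloring c of the pairs (i,j) with 1 ≤ i < j ≤ n, cr(c) = 2·Σ_{k=0}^{⌊n/2⌋−2} E_{≤≤k}(c) − (1/2)·binom(n,2)·⌊(n−2)/2⌋ − (1/2)·(1+(−1)^n)·E_{≤≤⌊n/2⌋−2}(c). -/
/-- Number of crossings of a 2-page book drawing of `K n`, encoded as a
2-coloring `c` of the pairs `(i,j)` with `1 ≤ i < j ≤ n` (edge `ij` is drawn in the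
page given by `c i j`).  Edges `(i,j)` and `(k,l)` cross iff `i < k < j < l` and
they have the same color. -/
def crossings (n : ℕ) (c : ℕ → ℕ → Bool) : ℕ :=
  ((((Finset.Icc 1 n) ×ˢ (Finset.Icc 1 n)) ×ˢ ((Finset.Icc 1 n) ×ˢ (Finset.Icc 1 n))).filter
    (fun p => p.1.1 < p.2.1 ∧ p.2.1 < p.1.2 ∧ p.1.2 < p.2.2 ∧
      c p.1.1 p.1.2 = c p.2.1 p.2.2)).card

/-- The Hill/Guy quantity `Z n = (1/4)⌊n/2⌋⌊(n-1)/2⌋⌊(n-2)/2⌋⌊(n-3)/2⌋`. -/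
def Z (n : ℕ) : ℕ := (n / 2) * ((n - 1) / 2) * ((n - 2) / 2) * ((n - 3) / 2) / 4

/-- `s(i,j)`: the number of `l < i` with `c l j = c i j` plus the number of
`j < l ≤ n` with `c i l = c i j`. -/
def sDeg (n : ℕ) (c : ℕ → ℕ → Bool) (i j : ℕ) : ℕ :=
  ((Finset.Ico 1 i).filter (fun l => c l j = c i j)).card +
  ((Finset.Ioc j n).filter (fun l => c i l = c i j)).card

/-- The edge `(i,j)` is a `kVal n c i j`-edge: `min (s(i,j), n - 2 - s(i,j))`. -/
def kVal (n : ℕ) (c : ℕ → ℕ → Bool) (i j : ℕ) : ℕ :=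
  min (sDeg n c i j) (n - 2 - sDeg n c i j)

/-- `E_k(c)`: the number of `k`-edges of `c`. -/
def Ek (n : ℕ) (c : ℕ → ℕ → Bool) (k : ℕ) : ℕ :=
  (((Finset.Icc 1 n) ×ˢ (Finset.Icc 1 n)).filter
    (fun p => p.1 < p.2 ∧ kVal n c p.1 p.2 = k)).card

/-- `E_{≤k}(c) = Σ_{j=0}^{k} E_j(c)`. -/
def Eleq (n : ℕ) (c : ℕ → ℕ → Bool) (k : ℕ) : ℕ :=
  ∑ j ∈ Finset.range (k + 1), Ek n c j

/-- `E_{≤≤k}(c) = Σ_{j=0}^{k} E_{≤j}(c)`. -/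
def Eleqleq (n : ℕ) (c : ℕ → ℕ → Bool) (k : ℕ) : ℕ :=
  ∑ j ∈ Finset.range (k + 1), Eleq n c j

/-- `E_{≤k}(c, c₁)`: the number of `(c,c₁)`-invariant `(≤ k)`-edges, where `c₁` is the
restriction of `c` to `K_{n-1}` (deleting the rightmost vertex `n`): edges `(i,j)` with
`j ≤ n - 1` that are `j'`-edges of both `c` (in `K_n`) and `c₁` (in `K_{n-1}`) for some `j' ≤ k`. -/
def EleqInv (n : ℕ) (c : ℕ → ℕ → Bool) (k : ℕ) : ℕ :=
  (((Finset.Icc 1 (n - 1)) ×ˢ (Finset.Icc 1 (n - 1))).filter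
    (fun p => p.1 < p.2 ∧ kVal n c p.1 p.2 = kVal (n - 1) c p.1 p.2 ∧
      kVal n c p.1 p.2 ≤ k)).card

/-- A 2-coloring is crossing optimal if it minimizes the number of crossings. -/
def IsOptimal (n : ℕ) (c : ℕ → ℕ → Bool) : Prop :=
  ∀ c' : ℕ → ℕ → Bool, crossings n c ≤ crossings n c'

/-- The spine convention: the edges `(i,i+1)` and the edge `(1,n)` are blue (`true`). -/
def SpineConvention (n : ℕ) (c : ℕ → ℕ → Bool) : Prop :=
  (∀ i, 1 ≤ i → i + 1 ≤ n → c i (i + 1) = true) ∧ c 1 n = true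

/-- The cyclic-shift transformation `f`. -/
def fT (n : ℕ) (c : ℕ → ℕ → Bool) : ℕ → ℕ → Bool :=
  fun i j => if j < n then c (i + 1) (j + 1) else c 1 (i + 1)

/-- The vertical-reflection transformation `g`. -/
def gT (n : ℕ) (c : ℕ → ℕ → Bool) : ℕ → ℕ → Bool :=
  fun i j => c (n + 1 - j) (n + 1 - i)

/-- The page-exchange transformation `h` (keeping the spine edges and `(1,n)` fixed). -/
def hT (n : ℕ) (c : ℕ → ℕ → Bool) : ℕ → ℕ → Bool :=
  fun i j => if j = i + 1 ∨ (i = 1 ∧ j = n) then c i j else !(c i j)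

/-- Two colorings are equivalent if `c' = h^a ∘ g^b ∘ f^m (c)` for some
`a, b ∈ {0,1}` and `0 ≤ m ≤ n - 1`. -/
def EquivCol (n : ℕ) (c c' : ℕ → ℕ → Bool) : Prop :=
  ∃ (a b : Bool) (m : ℕ), m ≤ n - 1 ∧
    ∀ i j, 1 ≤ i → i < j → j ≤ n →
      c' i j = (if a then hT n else id) ((if b then gT n else id) ((fT n)^[m] c)) i j

/-- The position (starting from 1) of the entry `(i,l)` in the order associated to the
entry `(i,j)`: first all entries `(i,l')`, `i < l' < j`, with `c i l' ≠ c i j` in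
decreasing order of `l'`, then all entries with `c i l' = c i j` in increasing order. -/
def orderPos (c : ℕ → ℕ → Bool) (i j l : ℕ) : ℕ :=
  if c i l ≠ c i j then
    ((Finset.Ioo i j).filter (fun l' => l ≤ l' ∧ c i l' ≠ c i j)).card
  else
    ((Finset.Ioo i j).filter (fun l' => c i l' ≠ c i j)).card +
    ((Finset.Ioo i j).filter (fun l' => l' ≤ l ∧ c i l' = c i j)).card

/-- The edge `(i,j)` (with `i < j`) is crossed by some other edge of the drawing. -/
def Crossed (n : ℕ) (c : ℕ → ℕ → Bool) (i j : ℕ) : Prop :=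
  ∃ k l, 1 ≤ k ∧ k < l ∧ l ≤ n ∧
    ((i < k ∧ k < j ∧ j < l ∧ c i j = c k l) ∨
     (k < i ∧ i < l ∧ l < j ∧ c i j = c k l))



open Finset

def ind (P : Prop) [Decidable P] : ℕ := if P then 1 else 0

lemma ind_and (P Q : Prop) [Decidable P] [Decidable Q] :
    ind (P ∧ Q) = ind P * ind Q := by
  by_cases hP : P <;> by_cases hQ : Q <;> simp [ind, hP, hQ]

lemma ind_and4 (A B C D : Prop) [Decidable A] [Decidable B] [Decidable C] [Decidable D] :
    ind (A ∧ B ∧ C ∧ D) = ind A * ind B * ind C * ind D := by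
  rw [ind_and, ind_and, ind_and]; ring

section swaps
variable {M : Type*} [AddCommMonoid M] (s : Finset ℕ)

lemma sw12 (F : ℕ → ℕ → ℕ → ℕ → M) :
    (∑ a ∈ s, ∑ b ∈ s, ∑ c ∈ s, ∑ d ∈ s, F b a c d)
      = ∑ a ∈ s, ∑ b ∈ s, ∑ c ∈ s, ∑ d ∈ s, F a b c d :=
  Finset.sum_comm

lemma sw23 (F : ℕ → ℕ → ℕ → ℕ → M) :
    (∑ a ∈ s, ∑ b ∈ s, ∑ c ∈ s, ∑ d ∈ s, F a c b d)
      = ∑ a ∈ s, ∑ b ∈ s, ∑ c ∈ s, ∑ d ∈ s, F a b c d :=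
  Finset.sum_congr rfl fun _ _ => Finset.sum_comm

lemma sw34 (F : ℕ → ℕ → ℕ → ℕ → M) :
    (∑ a ∈ s, ∑ b ∈ s, ∑ c ∈ s, ∑ d ∈ s, F a b d c)
      = ∑ a ∈ s, ∑ b ∈ s, ∑ c ∈ s, ∑ d ∈ s, F a b c d :=
  Finset.sum_congr rfl fun _ _ => Finset.sum_congr rfl fun _ _ => Finset.sum_comm

lemma perm_cdab (F : ℕ → ℕ → ℕ → ℕ → M) :
    (∑ a ∈ s, ∑ b ∈ s, ∑ c ∈ s, ∑ d ∈ s, F c d a b)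
      = ∑ a ∈ s, ∑ b ∈ s, ∑ c ∈ s, ∑ d ∈ s, F a b c d :=
  ((sw23 s _).trans ((sw12 s _).trans ((sw34 s _).trans (sw23 s _))))

lemma perm_dcab (F : ℕ → ℕ → ℕ → ℕ → M) :
    (∑ a ∈ s, ∑ b ∈ s, ∑ c ∈ s, ∑ d ∈ s, F d c a b)
      = ∑ a ∈ s, ∑ b ∈ s, ∑ c ∈ s, ∑ d ∈ s, F a b c d :=
  ((sw23 s _).trans ((sw12 s _).trans ((sw34 s _).trans ((sw23 s _).trans (sw12 s _)))))

lemma perm_cadb (F : ℕ → ℕ → ℕ → ℕ → M) :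
    (∑ a ∈ s, ∑ b ∈ s, ∑ c ∈ s, ∑ d ∈ s, F c a d b)
      = ∑ a ∈ s, ∑ b ∈ s, ∑ c ∈ s, ∑ d ∈ s, F a b c d :=
  ((sw23 s _).trans ((sw12 s _).trans (sw34 s _)))

lemma perm_cabd (F : ℕ → ℕ → ℕ → ℕ → M) :
    (∑ a ∈ s, ∑ b ∈ s, ∑ c ∈ s, ∑ d ∈ s, F c a b d)
      = ∑ a ∈ s, ∑ b ∈ s, ∑ c ∈ s, ∑ d ∈ s, F a b c d :=
  ((sw23 s _).trans (sw12 s _))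

lemma perm_adbc (F : ℕ → ℕ → ℕ → ℕ → M) :
    (∑ a ∈ s, ∑ b ∈ s, ∑ c ∈ s, ∑ d ∈ s, F a d b c)
      = ∑ a ∈ s, ∑ b ∈ s, ∑ c ∈ s, ∑ d ∈ s, F a b c d :=
  ((sw34 s _).trans (sw23 s _))

lemma perm_abdc (F : ℕ → ℕ → ℕ → ℕ → M) :
    (∑ a ∈ s, ∑ b ∈ s, ∑ c ∈ s, ∑ d ∈ s, F a b d c)
      = ∑ a ∈ s, ∑ b ∈ s, ∑ c ∈ s, ∑ d ∈ s, F a b c d :=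
  sw34 s _

lemma perm_dabc (F : ℕ → ℕ → ℕ → ℕ → M) :
    (∑ a ∈ s, ∑ b ∈ s, ∑ c ∈ s, ∑ d ∈ s, F d a b c)
      = ∑ a ∈ s, ∑ b ∈ s, ∑ c ∈ s, ∑ d ∈ s, F a b c d :=
  ((sw34 s _).trans ((sw23 s _).trans (sw12 s _)))

lemma perm_dacb (F : ℕ → ℕ → ℕ → ℕ → M) :
    (∑ a ∈ s, ∑ b ∈ s, ∑ c ∈ s, ∑ d ∈ s, F d a c b)
      = ∑ a ∈ s, ∑ b ∈ s, ∑ c ∈ s, ∑ d ∈ s, F a b c d :=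
  ((sw34 s _).trans ((sw23 s _).trans ((sw12 s _).trans (sw34 s _))))

lemma perm_acdb (F : ℕ → ℕ → ℕ → ℕ → M) :
    (∑ a ∈ s, ∑ b ∈ s, ∑ c ∈ s, ∑ d ∈ s, F a c d b)
      = ∑ a ∈ s, ∑ b ∈ s, ∑ c ∈ s, ∑ d ∈ s, F a b c d :=
  ((sw23 s _).trans (sw34 s _))

lemma perm_adcb (F : ℕ → ℕ → ℕ → ℕ → M) :
    (∑ a ∈ s, ∑ b ∈ s, ∑ c ∈ s, ∑ d ∈ s, F a d c b)
      = ∑ a ∈ s, ∑ b ∈ s, ∑ c ∈ s, ∑ d ∈ s, F a b c d :=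
  ((sw23 s _).trans ((sw34 s _).trans (sw23 s _)))

lemma perm_acbd (F : ℕ → ℕ → ℕ → ℕ → M) :
    (∑ a ∈ s, ∑ b ∈ s, ∑ c ∈ s, ∑ d ∈ s, F a c b d)
      = ∑ a ∈ s, ∑ b ∈ s, ∑ c ∈ s, ∑ d ∈ s, F a b c d :=
  sw23 s _

end swaps
section edge

variable (n : ℕ) (col : ℕ → ℕ → Bool)

variable {n}

lemma filter_lt_eq (i : ℕ) (hi : i ≤ n + 1) :
    (Finset.Icc 1 n).filter (· < i) = Finset.Ico 1 i := by
  ext l; simp only [Finset.mem_filter, Finset.mem_Icc, Finset.mem_Ico]; omega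

lemma filter_gt_eq (j : ℕ) (hj : 1 ≤ j) :
    (Finset.Icc 1 n).filter (j < ·) = Finset.Ioc j n := by
  ext l; simp only [Finset.mem_filter, Finset.mem_Icc, Finset.mem_Ioc]; omega

lemma filter_mid_eq (i j : ℕ) (hi : 1 ≤ i) (hj : j ≤ n + 1) :
    (Finset.Icc 1 n).filter (fun l => i < l ∧ l < j) = Finset.Ioo i j := by
  ext l; simp only [Finset.mem_filter, Finset.mem_Icc, Finset.mem_Ioo]; omega

lemma sum_region (R : ℕ → Prop) [DecidablePred R] (P : ℕ → Prop) [DecidablePred P] :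
    ∑ l ∈ Finset.Icc 1 n, ind (R l) * ind (P l)
      = (((Finset.Icc 1 n).filter R).filter P).card := by
  rw [Finset.filter_filter, Finset.card_filter]
  exact Finset.sum_congr rfl fun l _ => ((ind_and _ _).symm)

lemma sum_region3 (R : ℕ → Prop) [DecidablePred R] (R' : ℕ → Prop) [DecidablePred R'] :
    ∑ l ∈ Finset.Icc 1 n, ind (R l) * ind (R' l)
      = ((Finset.Icc 1 n).filter (fun l => R l ∧ R' l)).card := by
  rw [Finset.card_filter]
  exact Finset.sum_congr rfl fun l _ => ((ind_and _ _).symm)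

variable (hn3 : 3 ≤ n)

section ij
variable {i j : ℕ} (hi : 1 ≤ i) (hij : i < j) (hj : j ≤ n)

include hi hij hj

lemma sDeg_eq_sum :
    sDeg n col i j = ∑ l ∈ Finset.Icc 1 n,
      (ind (l < i) * ind (col l j = col i j) + ind (j < l) * ind (col i l = col i j)) := by
  rw [Finset.sum_add_distrib, sum_region (· < i), sum_region (j < ·),
    filter_lt_eq i (by omega), filter_gt_eq j (by omega)]
  rfl

lemma tDeg_eq_sum :
    n - 2 - sDeg n col i j = ∑ l ∈ Finset.Icc 1 n,
      (ind (l < i) * ind (¬(col l j = col i j)) + ind (i < l) * ind (l < j)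
        + ind (j < l) * ind (¬(col i l = col i j))) := by
  have h1 := Finset.card_filter_add_card_filter_not
    (s := Finset.Ico 1 i) (p := fun l => col l j = col i j)
  have h2 := Finset.card_filter_add_card_filter_not
    (s := Finset.Ioc j n) (p := fun l => col i l = col i j)
  have hc1 : (Finset.Ico 1 i).card = i - 1 := Nat.card_Ico 1 i
  have hc2 : (Finset.Ioc j n).card = n - j := Nat.card_Ioc j n
  have hc3 : (Finset.Ioo i j).card = j - i - 1 := Nat.card_Ioo i j
  rw [Finset.sum_add_distrib, Finset.sum_add_distrib,
    sum_region (· < i), sum_region (j < ·), sum_region3 (i < ·) (· < j),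
    filter_lt_eq i (by omega), filter_gt_eq j (by omega), filter_mid_eq i j (by omega) (by omega)]
  unfold sDeg
  omega

lemma sDeg_le : sDeg n col i j ≤ n - 2 := by
  have h1 : ((Finset.Ico 1 i).filter (fun l => col l j = col i j)).card ≤ i - 1 := by
    calc _ ≤ (Finset.Ico 1 i).card := Finset.card_filter_le _ _
    _ = i - 1 := Nat.card_Ico 1 i
  have h2 : ((Finset.Ioc j n).filter (fun l => col i l = col i j)).card ≤ n - j := by
    calc _ ≤ (Finset.Ioc j n).card := Finset.card_filter_le _ _
    _ = n - j := Nat.card_Ioc j n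
  unfold sDeg
  omega

lemma regionsum_eq : ∑ l ∈ Finset.Icc 1 n,
    (ind (l < i) + ind (i < l) * ind (l < j) + ind (j < l)) = n - 2 := by
  have e1 : ∀ l, ind (l < i) = ind (l < i) * ind (True) := by simp [ind]
  rw [Finset.sum_add_distrib, Finset.sum_add_distrib]
  have r1 : ∑ l ∈ Finset.Icc 1 n, ind (l < i) = i - 1 := by
    unfold ind
    rw [← Finset.card_filter, filter_lt_eq i (by omega)]
    exact Nat.card_Ico 1 i
  have r2 : ∑ l ∈ Finset.Icc 1 n, ind (i < l) * ind (l < j) = j - i - 1 := by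
    rw [sum_region3 (i < ·) (· < j), filter_mid_eq i j (by omega) (by omega)]
    exact Nat.card_Ioo i j
  have r3 : ∑ l ∈ Finset.Icc 1 n, ind (j < l) = n - j := by
    unfold ind
    rw [← Finset.card_filter, filter_gt_eq j (by omega)]
    exact Nat.card_Ioc j n
  omega

end ij
end edge
section micro
variable (col : ℕ → ℕ → Bool)

lemma mA1 (i j l l' : ℕ) :
    ind (i < j) * ((ind (l < i) * ind (col l j = col i j)) * (ind (l' < i) * ind (¬(col l' j = col i j))))
    = ind (l < l') * ind (l' < i) * ind (i < j) * (ind (col l j = col i j) * ind (¬(col l' j = col i j)))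
      + ind (l' < l) * ind (l < i) * ind (i < j) * (ind (col l j = col i j) * ind (¬(col l' j = col i j))) := by
  rcases eq_or_ne l l' with rfl | hne <;>
    · unfold ind; split_ifs <;> first | contradiction | omega

lemma mA2 (i j l l' : ℕ) :
    ind (i < j) * ((ind (l < i) * ind (col l j = col i j)) * (ind (i < l') * ind (l' < j)))
    = ind (l < i) * ind (i < l') * ind (l' < j) * ind (col l j = col i j) := by
  unfold ind; split_ifs <;> first | contradiction | omega

lemma mA3 (i j l l' : ℕ) :
    ind (i < j) * ((ind (l < i) * ind (col l j = col i j)) * (ind (j < l') * ind (¬(col i l' = col i j))))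
    = ind (l < i) * ind (i < j) * ind (j < l') * (ind (col l j = col i j) * ind (¬(col i l' = col i j))) := by
  unfold ind; split_ifs <;> first | contradiction | omega

lemma mB1 (i j l l' : ℕ) :
    ind (i < j) * ((ind (j < l) * ind (col i l = col i j)) * (ind (l' < i) * ind (¬(col l' j = col i j))))
    = ind (l' < i) * ind (i < j) * ind (j < l) * (ind (col i l = col i j) * ind (¬(col l' j = col i j))) := by
  unfold ind; split_ifs <;> first | contradiction | omega

lemma mB2 (i j l l' : ℕ) :
    ind (i < j) * ((ind (j < l) * ind (col i l = col i j)) * (ind (i < l') * ind (l' < j)))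
    = ind (i < l') * ind (l' < j) * ind (j < l) * ind (col i l = col i j) := by
  unfold ind; split_ifs <;> first | contradiction | omega

lemma mB3 (i j l l' : ℕ) :
    ind (i < j) * ((ind (j < l) * ind (col i l = col i j)) * (ind (j < l') * ind (¬(col i l' = col i j))))
    = ind (i < j) * ind (j < l) * ind (l < l') * (ind (col i l = col i j) * ind (¬(col i l' = col i j)))
      + ind (i < j) * ind (j < l') * ind (l' < l) * (ind (col i l = col i j) * ind (¬(col i l' = col i j))) := by
  rcases eq_or_ne l l' with rfl | hne <;>
    · unfold ind; split_ifs <;> first | contradiction | omega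

lemma cLL (i j l l' : ℕ) :
    ind (i < j) * (ind (l < i) * ind (l' < i))
    = ind (l < l') * ind (l' < i) * ind (i < j) + ind (l' < l) * ind (l < i) * ind (i < j)
      + ind (i < j) * (ind (l = l') * ind (l < i)) := by
  unfold ind; split_ifs <;> first | contradiction | omega

lemma cLM (i j l l' : ℕ) :
    ind (i < j) * (ind (l < i) * (ind (i < l') * ind (l' < j)))
    = ind (l < i) * ind (i < l') * ind (l' < j) := by
  unfold ind; split_ifs <;> first | contradiction | omega

lemma cLR (i j l l' : ℕ) :
    ind (i < j) * (ind (l < i) * ind (j < l'))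
    = ind (l < i) * ind (i < j) * ind (j < l') := by
  unfold ind; split_ifs <;> first | contradiction | omega

lemma cML (i j l l' : ℕ) :
    ind (i < j) * ((ind (i < l) * ind (l < j)) * ind (l' < i))
    = ind (l' < i) * ind (i < l) * ind (l < j) := by
  unfold ind; split_ifs <;> first | contradiction | omega

lemma cMM (i j l l' : ℕ) :
    ind (i < j) * ((ind (i < l) * ind (l < j)) * (ind (i < l') * ind (l' < j)))
    = ind (i < l) * ind (l < l') * ind (l' < j) + ind (i < l') * ind (l' < l) * ind (l < j)
      + ind (i < j) * (ind (l = l') * (ind (i < l) * ind (l < j))) := by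
  unfold ind; split_ifs <;> first | contradiction | omega

lemma cMR (i j l l' : ℕ) :
    ind (i < j) * ((ind (i < l) * ind (l < j)) * ind (j < l'))
    = ind (i < l) * ind (l < j) * ind (j < l') := by
  unfold ind; split_ifs <;> first | contradiction | omega

lemma cRL (i j l l' : ℕ) :
    ind (i < j) * (ind (j < l) * ind (l' < i))
    = ind (l' < i) * ind (i < j) * ind (j < l) := by
  unfold ind; split_ifs <;> first | contradiction | omega

lemma cRM (i j l l' : ℕ) :
    ind (i < j) * (ind (j < l) * (ind (i < l') * ind (l' < j)))
    = ind (i < l') * ind (l' < j) * ind (j < l) := by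
  unfold ind; split_ifs <;> first | contradiction | omega

lemma cRR (i j l l' : ℕ) :
    ind (i < j) * (ind (j < l) * ind (j < l'))
    = ind (i < j) * ind (j < l) * ind (l < l') + ind (i < j) * ind (j < l') * ind (l' < l)
      + ind (i < j) * (ind (l = l') * ind (j < l)) := by
  unfold ind; split_ifs <;> first | contradiction | omega

lemma pw3 (a b u v : ℕ) :
    ind (a < b) * ind (b < u) * ind (u < v) * (ind (col a v = col u v) * ind (¬(col b v = col u v)))
    + ind (a < b) * ind (b < u) * ind (u < v) * (ind (col b v = col u v) * ind (¬(col a v = col u v)))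
    + ind (a < b) * ind (b < u) * ind (u < v) * ind (col a v = col b v)
    + ind (a < b) * ind (b < u) * ind (u < v) * (ind (col a u = col b u) * ind (¬(col b v = col b u)))
    + ind (a < b) * ind (b < u) * ind (u < v) * ind (col a v = col a u)
    + ind (a < b) * ind (b < u) * ind (u < v) * (ind (col a u = col a b) * ind (¬(col a v = col a b)))
    + ind (a < b) * ind (b < u) * ind (u < v) * (ind (col a v = col a b) * ind (¬(col a u = col a b)))
    + ind (a < b) * ind (b < u) * ind (u < v) * (ind (col b v = col b u) * ind (¬(col a u = col b u)))
    + ind (a < b) * ind (b < u) * ind (u < v) * ind (col a u = col b v)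
    = 3 * (ind (a < b) * ind (b < u) * ind (u < v)) := by
  by_cases h1 : a < b <;> by_cases h2 : b < u <;> by_cases h3 : u < v <;>
    simp only [ind, h1, h2, h3, if_true, if_false] <;>
    first
      | (cases hp1 : col a b <;> cases hp2 : col a u <;> cases hp3 : col a v <;>
          cases hp4 : col b u <;> cases hp5 : col b v <;> cases hp6 : col u v <;>
          simp [hp1, hp2, hp3, hp4, hp5, hp6])
      | ring

end micro
section assembly
variable (n : ℕ) (col : ℕ → ℕ → Bool)

/-- the canonical chain count -/
def Q4 : ℕ := ∑ a ∈ Finset.Icc 1 n, ∑ b ∈ Finset.Icc 1 n, ∑ u ∈ Finset.Icc 1 n, ∑ v ∈ Finset.Icc 1 n,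
  ind (a < b) * ind (b < u) * ind (u < v)

lemma sum_S (f : ℕ → ℕ → ℕ) :
    ∑ p ∈ ((Finset.Icc 1 n) ×ˢ (Finset.Icc 1 n)).filter (fun p => p.1 < p.2), f p.1 p.2
      = ∑ i ∈ Finset.Icc 1 n, ∑ j ∈ Finset.Icc 1 n, ind (i < j) * f i j := by
  rw [Finset.sum_filter, Finset.sum_product]
  exact Finset.sum_congr rfl fun i _ => Finset.sum_congr rfl fun j _ => by
    by_cases h : i < j <;> simp [ind, h]

lemma hcr :
    crossings n col = ∑ a ∈ Finset.Icc 1 n, ∑ b ∈ Finset.Icc 1 n, ∑ u ∈ Finset.Icc 1 n, ∑ v ∈ Finset.Icc 1 n,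
      ind (a < b) * ind (b < u) * ind (u < v) * ind (col a u = col b v) := by
  unfold crossings
  rw [Finset.card_filter]
  rw [Finset.sum_product]
  calc (∑ p ∈ (Finset.Icc 1 n) ×ˢ (Finset.Icc 1 n), ∑ q ∈ (Finset.Icc 1 n) ×ˢ (Finset.Icc 1 n),
          if p.1 < q.1 ∧ q.1 < p.2 ∧ p.2 < q.2 ∧ col p.1 p.2 = col q.1 q.2 then 1 else 0)
      = ∑ a ∈ Finset.Icc 1 n, ∑ b ∈ Finset.Icc 1 n, ∑ x ∈ Finset.Icc 1 n, ∑ y ∈ Finset.Icc 1 n,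
          ind (a < x) * ind (x < b) * ind (b < y) * ind (col a b = col x y) := by
        rw [Finset.sum_product]
        refine Finset.sum_congr rfl fun a _ => Finset.sum_congr rfl fun b _ => ?_
        rw [Finset.sum_product]
        refine Finset.sum_congr rfl fun x _ => Finset.sum_congr rfl fun y _ => ?_
        rw [← ind_and4]
        rfl
    _ = _ := perm_acbd _ (fun a b u v => ind (a < b) * ind (b < u) * ind (u < v) * ind (col a u = col b v))

end assembly
section Tside
variable (n : ℕ) (col : ℕ → ℕ → Bool)

lemma ptT (i j l l' : ℕ) :
    ind (i < j) * ((ind (l < i) * ind (col l j = col i j) + ind (j < l) * ind (col i l = col i j)) *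
      (ind (l' < i) * ind (¬(col l' j = col i j)) + ind (i < l') * ind (l' < j)
        + ind (j < l') * ind (¬(col i l' = col i j))))
    = (ind (l < l') * ind (l' < i) * ind (i < j) * (ind (col l j = col i j) * ind (¬(col l' j = col i j)))
        + ind (l' < l) * ind (l < i) * ind (i < j) * (ind (col l j = col i j) * ind (¬(col l' j = col i j))))
      + ind (l < i) * ind (i < l') * ind (l' < j) * ind (col l j = col i j)
      + ind (l < i) * ind (i < j) * ind (j < l') * (ind (col l j = col i j) * ind (¬(col i l' = col i j)))
      + ind (l' < i) * ind (i < j) * ind (j < l) * (ind (col i l = col i j) * ind (¬(col l' j = col i j)))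
      + ind (i < l') * ind (l' < j) * ind (j < l) * ind (col i l = col i j)
      + (ind (i < j) * ind (j < l) * ind (l < l') * (ind (col i l = col i j) * ind (¬(col i l' = col i j)))
        + ind (i < j) * ind (j < l') * ind (l' < l) * (ind (col i l = col i j) * ind (¬(col i l' = col i j)))) := by
  calc _ = ind (i < j) * ((ind (l < i) * ind (col l j = col i j)) * (ind (l' < i) * ind (¬(col l' j = col i j))))
      + ind (i < j) * ((ind (l < i) * ind (col l j = col i j)) * (ind (i < l') * ind (l' < j)))
      + ind (i < j) * ((ind (l < i) * ind (col l j = col i j)) * (ind (j < l') * ind (¬(col i l' = col i j))))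
      + ind (i < j) * ((ind (j < l) * ind (col i l = col i j)) * (ind (l' < i) * ind (¬(col l' j = col i j))))
      + ind (i < j) * ((ind (j < l) * ind (col i l = col i j)) * (ind (i < l') * ind (l' < j)))
      + ind (i < j) * ((ind (j < l) * ind (col i l = col i j)) * (ind (j < l') * ind (¬(col i l' = col i j)))) := by
        ring
    _ = _ := by
        rw [mA1 col i j l l', mA2 col i j l l', mA3 col i j l l', mB1 col i j l l',
          mB2 col i j l l', mB3 col i j l l']

set_option maxHeartbeats 1000000 in
lemma lemT :
    (∑ p ∈ ((Finset.Icc 1 n) ×ˢ (Finset.Icc 1 n)).filter (fun p => p.1 < p.2),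
        sDeg n col p.1 p.2 * (n - 2 - sDeg n col p.1 p.2))
    = ((∑ a ∈ Finset.Icc 1 n, ∑ b ∈ Finset.Icc 1 n, ∑ u ∈ Finset.Icc 1 n, ∑ v ∈ Finset.Icc 1 n,
        ind (a < b) * ind (b < u) * ind (u < v) * (ind (col a v = col u v) * ind (¬(col b v = col u v))))
      + (∑ a ∈ Finset.Icc 1 n, ∑ b ∈ Finset.Icc 1 n, ∑ u ∈ Finset.Icc 1 n, ∑ v ∈ Finset.Icc 1 n,
        ind (a < b) * ind (b < u) * ind (u < v) * (ind (col b v = col u v) * ind (¬(col a v = col u v)))))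
      + (∑ a ∈ Finset.Icc 1 n, ∑ b ∈ Finset.Icc 1 n, ∑ u ∈ Finset.Icc 1 n, ∑ v ∈ Finset.Icc 1 n,
        ind (a < b) * ind (b < u) * ind (u < v) * ind (col a v = col b v))
      + (∑ a ∈ Finset.Icc 1 n, ∑ b ∈ Finset.Icc 1 n, ∑ u ∈ Finset.Icc 1 n, ∑ v ∈ Finset.Icc 1 n,
        ind (a < b) * ind (b < u) * ind (u < v) * (ind (col a u = col b u) * ind (¬(col b v = col b u))))
      + (∑ a ∈ Finset.Icc 1 n, ∑ b ∈ Finset.Icc 1 n, ∑ u ∈ Finset.Icc 1 n, ∑ v ∈ Finset.Icc 1 n,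
        ind (a < b) * ind (b < u) * ind (u < v) * (ind (col b v = col b u) * ind (¬(col a u = col b u))))
      + (∑ a ∈ Finset.Icc 1 n, ∑ b ∈ Finset.Icc 1 n, ∑ u ∈ Finset.Icc 1 n, ∑ v ∈ Finset.Icc 1 n,
        ind (a < b) * ind (b < u) * ind (u < v) * ind (col a v = col a u))
      + ((∑ a ∈ Finset.Icc 1 n, ∑ b ∈ Finset.Icc 1 n, ∑ u ∈ Finset.Icc 1 n, ∑ v ∈ Finset.Icc 1 n,
        ind (a < b) * ind (b < u) * ind (u < v) * (ind (col a u = col a b) * ind (¬(col a v = col a b))))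
      + (∑ a ∈ Finset.Icc 1 n, ∑ b ∈ Finset.Icc 1 n, ∑ u ∈ Finset.Icc 1 n, ∑ v ∈ Finset.Icc 1 n,
        ind (a < b) * ind (b < u) * ind (u < v) * (ind (col a v = col a b) * ind (¬(col a u = col a b))))) := by
  rw [sum_S n (fun i j => sDeg n col i j * (n - 2 - sDeg n col i j))]
  calc (∑ i ∈ Finset.Icc 1 n, ∑ j ∈ Finset.Icc 1 n,
          ind (i < j) * (sDeg n col i j * (n - 2 - sDeg n col i j)))
      = ∑ i ∈ Finset.Icc 1 n, ∑ j ∈ Finset.Icc 1 n, ∑ l ∈ Finset.Icc 1 n, ∑ l' ∈ Finset.Icc 1 n,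
          ind (i < j) * ((ind (l < i) * ind (col l j = col i j) + ind (j < l) * ind (col i l = col i j)) *
            (ind (l' < i) * ind (¬(col l' j = col i j)) + ind (i < l') * ind (l' < j)
              + ind (j < l') * ind (¬(col i l' = col i j)))) := by
        refine Finset.sum_congr rfl fun i hi => Finset.sum_congr rfl fun j hj => ?_
        by_cases hij : i < j
        · have h1 : 1 ≤ i := (Finset.mem_Icc.mp hi).1
          have h2 : j ≤ n := (Finset.mem_Icc.mp hj).2
          rw [tDeg_eq_sum col h1 hij h2, sDeg_eq_sum col h1 hij h2, Finset.sum_mul_sum]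
          simp only [Finset.mul_sum]
        · simp [ind, hij]
    _ = ∑ i ∈ Finset.Icc 1 n, ∑ j ∈ Finset.Icc 1 n, ∑ l ∈ Finset.Icc 1 n, ∑ l' ∈ Finset.Icc 1 n,
          ((ind (l < l') * ind (l' < i) * ind (i < j) * (ind (col l j = col i j) * ind (¬(col l' j = col i j)))
            + ind (l' < l) * ind (l < i) * ind (i < j) * (ind (col l j = col i j) * ind (¬(col l' j = col i j))))
          + ind (l < i) * ind (i < l') * ind (l' < j) * ind (col l j = col i j)
          + ind (l < i) * ind (i < j) * ind (j < l') * (ind (col l j = col i j) * ind (¬(col i l' = col i j)))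
          + ind (l' < i) * ind (i < j) * ind (j < l) * (ind (col i l = col i j) * ind (¬(col l' j = col i j)))
          + ind (i < l') * ind (l' < j) * ind (j < l) * ind (col i l = col i j)
          + (ind (i < j) * ind (j < l) * ind (l < l') * (ind (col i l = col i j) * ind (¬(col i l' = col i j)))
            + ind (i < j) * ind (j < l') * ind (l' < l) * (ind (col i l = col i j) * ind (¬(col i l' = col i j))))) := by
        exact Finset.sum_congr rfl fun i _ => Finset.sum_congr rfl fun j _ =>
          Finset.sum_congr rfl fun l _ => Finset.sum_congr rfl fun l' _ => ptT col i j l l'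
    _ = _ := by
        simp only [Finset.sum_add_distrib]
        congr 1
        · congr 1
          · congr 1
            · congr 1
              · congr 1
                · congr 1
                  · exact perm_cdab _ (fun a b u v => ind (a < b) * ind (b < u) * ind (u < v) *
                      (ind (col a v = col u v) * ind (¬(col b v = col u v))))
                  · exact perm_dcab _ (fun a b u v => ind (a < b) * ind (b < u) * ind (u < v) *
                      (ind (col b v = col u v) * ind (¬(col a v = col u v))))
                · exact perm_cadb _ (fun a b u v => ind (a < b) * ind (b < u) * ind (u < v) *
                    ind (col a v = col b v))
              · exact perm_cabd _ (fun a b u v => ind (a < b) * ind (b < u) * ind (u < v) *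
                  (ind (col a u = col b u) * ind (¬(col b v = col b u))))
            · exact perm_dabc _ (fun a b u v => ind (a < b) * ind (b < u) * ind (u < v) *
                (ind (col b v = col b u) * ind (¬(col a u = col b u))))
          · exact perm_adbc _ (fun a b u v => ind (a < b) * ind (b < u) * ind (u < v) *
              ind (col a v = col a u))
        · congr 1
          exact perm_abdc _ (fun a b u v => ind (a < b) * ind (b < u) * ind (u < v) *
              (ind (col a v = col a b) * ind (¬(col a u = col a b))))

end Tside
section Allside
variable (n : ℕ) (col : ℕ → ℕ → Bool)

lemma ptA (i j l l' : ℕ) :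
    ind (i < j) * ((ind (l < i) + ind (i < l) * ind (l < j) + ind (j < l)) *
      (ind (l' < i) + ind (i < l') * ind (l' < j) + ind (j < l')))
    = (ind (l < l') * ind (l' < i) * ind (i < j)
      + ind (l' < l) * ind (l < i) * ind (i < j)
      + ind (l < i) * ind (i < l') * ind (l' < j)
      + ind (l < i) * ind (i < j) * ind (j < l')
      + ind (l' < i) * ind (i < l) * ind (l < j)
      + ind (i < l) * ind (l < l') * ind (l' < j)
      + ind (i < l') * ind (l' < l) * ind (l < j)
      + ind (i < l) * ind (l < j) * ind (j < l')
      + ind (l' < i) * ind (i < j) * ind (j < l)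
      + ind (i < l') * ind (l' < j) * ind (j < l)
      + ind (i < j) * ind (j < l) * ind (l < l')
      + ind (i < j) * ind (j < l') * ind (l' < l))
      + ind (i < j) * (ind (l = l') * (ind (l < i) + ind (i < l) * ind (l < j) + ind (j < l))) := by
  calc _ = ind (i < j) * (ind (l < i) * ind (l' < i))
      + ind (i < j) * (ind (l < i) * (ind (i < l') * ind (l' < j)))
      + ind (i < j) * (ind (l < i) * ind (j < l'))
      + ind (i < j) * ((ind (i < l) * ind (l < j)) * ind (l' < i))
      + ind (i < j) * ((ind (i < l) * ind (l < j)) * (ind (i < l') * ind (l' < j)))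
      + ind (i < j) * ((ind (i < l) * ind (l < j)) * ind (j < l'))
      + ind (i < j) * (ind (j < l) * ind (l' < i))
      + ind (i < j) * (ind (j < l) * (ind (i < l') * ind (l' < j)))
      + ind (i < j) * (ind (j < l) * ind (j < l')) := by ring
    _ = _ := by
      rw [cLL i j l l', cLM i j l l', cLR i j l l', cML i j l l', cMM i j l l',
        cMR i j l l', cRL i j l l', cRM i j l l', cRR i j l l']
      ring

lemma sum4_add (F G : ℕ → ℕ → ℕ → ℕ → ℕ) :
    (∑ i ∈ Finset.Icc 1 n, ∑ j ∈ Finset.Icc 1 n, ∑ l ∈ Finset.Icc 1 n, ∑ l' ∈ Finset.Icc 1 n,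
      (F i j l l' + G i j l l'))
    = (∑ i ∈ Finset.Icc 1 n, ∑ j ∈ Finset.Icc 1 n, ∑ l ∈ Finset.Icc 1 n, ∑ l' ∈ Finset.Icc 1 n, F i j l l')
      + (∑ i ∈ Finset.Icc 1 n, ∑ j ∈ Finset.Icc 1 n, ∑ l ∈ Finset.Icc 1 n, ∑ l' ∈ Finset.Icc 1 n, G i j l l') := by
  simp [Finset.sum_add_distrib]

set_option maxHeartbeats 1000000 in
lemma chains12 :
    (∑ i ∈ Finset.Icc 1 n, ∑ j ∈ Finset.Icc 1 n, ∑ l ∈ Finset.Icc 1 n, ∑ l' ∈ Finset.Icc 1 n,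
      (ind (l < l') * ind (l' < i) * ind (i < j)
      + ind (l' < l) * ind (l < i) * ind (i < j)
      + ind (l < i) * ind (i < l') * ind (l' < j)
      + ind (l < i) * ind (i < j) * ind (j < l')
      + ind (l' < i) * ind (i < l) * ind (l < j)
      + ind (i < l) * ind (l < l') * ind (l' < j)
      + ind (i < l') * ind (l' < l) * ind (l < j)
      + ind (i < l) * ind (l < j) * ind (j < l')
      + ind (l' < i) * ind (i < j) * ind (j < l)
      + ind (i < l') * ind (l' < j) * ind (j < l)
      + ind (i < j) * ind (j < l) * ind (l < l')
      + ind (i < j) * ind (j < l') * ind (l' < l)))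
    = 12 * Q4 n := by
  have e : Q4 n + Q4 n + Q4 n + Q4 n + Q4 n + Q4 n + Q4 n + Q4 n + Q4 n + Q4 n + Q4 n + Q4 n
      = 12 * Q4 n := by ring
  rw [← e]
  simp only [Finset.sum_add_distrib]
  congr 1
  · congr 1
    · congr 1
      · congr 1
        · congr 1
          · congr 1
            · congr 1
              · congr 1
                · congr 1
                  · congr 1
                    · congr 1
                      · exact perm_cdab _ (fun a b u v => ind (a < b) * ind (b < u) * ind (u < v))
                      · exact perm_dcab _ (fun a b u v => ind (a < b) * ind (b < u) * ind (u < v))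
                    · exact perm_cadb _ (fun a b u v => ind (a < b) * ind (b < u) * ind (u < v))
                  · exact perm_cabd _ (fun a b u v => ind (a < b) * ind (b < u) * ind (u < v))
                · exact perm_dacb _ (fun a b u v => ind (a < b) * ind (b < u) * ind (u < v))
              · exact perm_acdb _ (fun a b u v => ind (a < b) * ind (b < u) * ind (u < v))
            · exact perm_adcb _ (fun a b u v => ind (a < b) * ind (b < u) * ind (u < v))
          · exact perm_acbd _ (fun a b u v => ind (a < b) * ind (b < u) * ind (u < v))
        · exact perm_dabc _ (fun a b u v => ind (a < b) * ind (b < u) * ind (u < v))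
      · exact perm_adbc _ (fun a b u v => ind (a < b) * ind (b < u) * ind (u < v))
  · exact perm_abdc _ (fun a b u v => ind (a < b) * ind (b < u) * ind (u < v))

lemma delta_inner (i j l : ℕ) (hl : l ∈ Finset.Icc 1 n) (w : ℕ) :
    (∑ l' ∈ Finset.Icc 1 n, ind (i < j) * (ind (l = l') * w)) = ind (i < j) * w := by
  calc (∑ l' ∈ Finset.Icc 1 n, ind (i < j) * (ind (l = l') * w))
      = ∑ l' ∈ Finset.Icc 1 n, if l = l' then ind (i < j) * w else 0 := by
        refine Finset.sum_congr rfl fun l' _ => ?_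
        unfold ind; split_ifs <;> omega
    _ = if l ∈ Finset.Icc 1 n then ind (i < j) * w else 0 := Finset.sum_ite_eq _ _ _
    _ = _ := if_pos hl

lemma deltas :
    (∑ i ∈ Finset.Icc 1 n, ∑ j ∈ Finset.Icc 1 n, ∑ l ∈ Finset.Icc 1 n, ∑ l' ∈ Finset.Icc 1 n,
      ind (i < j) * (ind (l = l') * (ind (l < i) + ind (i < l) * ind (l < j) + ind (j < l))))
    = ∑ p ∈ ((Finset.Icc 1 n) ×ˢ (Finset.Icc 1 n)).filter (fun p => p.1 < p.2), (n - 2) := by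
  rw [sum_S n (fun _ _ => n - 2)]
  refine Finset.sum_congr rfl fun i hi => Finset.sum_congr rfl fun j hj => ?_
  calc (∑ l ∈ Finset.Icc 1 n, ∑ l' ∈ Finset.Icc 1 n,
        ind (i < j) * (ind (l = l') * (ind (l < i) + ind (i < l) * ind (l < j) + ind (j < l))))
      = ∑ l ∈ Finset.Icc 1 n,
          ind (i < j) * (ind (l < i) + ind (i < l) * ind (l < j) + ind (j < l)) := by
        exact Finset.sum_congr rfl fun l hl => delta_inner n i j l hl _
    _ = ind (i < j) * ∑ l ∈ Finset.Icc 1 n,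
          (ind (l < i) + ind (i < l) * ind (l < j) + ind (j < l)) := by
        rw [Finset.mul_sum]
    _ = ind (i < j) * (n - 2) := by
        by_cases hij : i < j
        · rw [regionsum_eq (Finset.mem_Icc.mp hi).1 hij (Finset.mem_Icc.mp hj).2]
        · simp [ind, hij]

end Allside
section Core
variable (n : ℕ) (col : ℕ → ℕ → Bool)

set_option maxHeartbeats 1000000 in
lemma hall :
    (∑ p ∈ ((Finset.Icc 1 n) ×ˢ (Finset.Icc 1 n)).filter (fun p => p.1 < p.2), (n - 2) * (n - 3))
      = 12 * Q4 n := by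
  have key : (∑ p ∈ ((Finset.Icc 1 n) ×ˢ (Finset.Icc 1 n)).filter (fun p => p.1 < p.2),
      (n - 2) * (n - 2)) = 12 * Q4 n
        + ∑ p ∈ ((Finset.Icc 1 n) ×ˢ (Finset.Icc 1 n)).filter (fun p => p.1 < p.2), (n - 2) := by
    rw [sum_S n (fun _ _ => (n - 2) * (n - 2))]
    calc (∑ i ∈ Finset.Icc 1 n, ∑ j ∈ Finset.Icc 1 n, ind (i < j) * ((n - 2) * (n - 2)))
        = ∑ i ∈ Finset.Icc 1 n, ∑ j ∈ Finset.Icc 1 n, ∑ l ∈ Finset.Icc 1 n, ∑ l' ∈ Finset.Icc 1 n,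
            ind (i < j) * ((ind (l < i) + ind (i < l) * ind (l < j) + ind (j < l)) *
              (ind (l' < i) + ind (i < l') * ind (l' < j) + ind (j < l'))) := by
          refine Finset.sum_congr rfl fun i hi => Finset.sum_congr rfl fun j hj => ?_
          by_cases hij : i < j
          · rw [← regionsum_eq (Finset.mem_Icc.mp hi).1 hij (Finset.mem_Icc.mp hj).2,
              Finset.sum_mul_sum]
            simp only [Finset.mul_sum]
          · simp [ind, hij]
      _ = ∑ i ∈ Finset.Icc 1 n, ∑ j ∈ Finset.Icc 1 n, ∑ l ∈ Finset.Icc 1 n, ∑ l' ∈ Finset.Icc 1 n,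
            ((ind (l < l') * ind (l' < i) * ind (i < j)
            + ind (l' < l) * ind (l < i) * ind (i < j)
            + ind (l < i) * ind (i < l') * ind (l' < j)
            + ind (l < i) * ind (i < j) * ind (j < l')
            + ind (l' < i) * ind (i < l) * ind (l < j)
            + ind (i < l) * ind (l < l') * ind (l' < j)
            + ind (i < l') * ind (l' < l) * ind (l < j)
            + ind (i < l) * ind (l < j) * ind (j < l')
            + ind (l' < i) * ind (i < j) * ind (j < l)
            + ind (i < l') * ind (l' < j) * ind (j < l)
            + ind (i < j) * ind (j < l) * ind (l < l')
            + ind (i < j) * ind (j < l') * ind (l' < l))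
            + ind (i < j) * (ind (l = l') * (ind (l < i) + ind (i < l) * ind (l < j) + ind (j < l)))) := by
          exact Finset.sum_congr rfl fun i _ => Finset.sum_congr rfl fun j _ =>
            Finset.sum_congr rfl fun l _ => Finset.sum_congr rfl fun l' _ => ptA i j l l'
      _ = _ := by
          rw [sum4_add n
            (fun i j l l' =>
              ind (l < l') * ind (l' < i) * ind (i < j)
            + ind (l' < l) * ind (l < i) * ind (i < j)
            + ind (l < i) * ind (i < l') * ind (l' < j)
            + ind (l < i) * ind (i < j) * ind (j < l')
            + ind (l' < i) * ind (i < l) * ind (l < j)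
            + ind (i < l) * ind (l < l') * ind (l' < j)
            + ind (i < l') * ind (l' < l) * ind (l < j)
            + ind (i < l) * ind (l < j) * ind (j < l')
            + ind (l' < i) * ind (i < j) * ind (j < l)
            + ind (i < l') * ind (l' < j) * ind (j < l)
            + ind (i < j) * ind (j < l) * ind (l < l')
            + ind (i < j) * ind (j < l') * ind (l' < l))
            (fun i j l l' =>
              ind (i < j) * (ind (l = l') * (ind (l < i) + ind (i < l) * ind (l < j) + ind (j < l))))]
          rw [chains12 n, deltas n]
  have harith : (n - 2) * (n - 2) = (n - 2) * (n - 3) + (n - 2) := by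
    have h3 : n - 3 = (n - 2) - 1 := by omega
    rw [h3]
    generalize (n - 2) = m
    cases m with
    | zero => simp
    | succ k => simp only [Nat.succ_sub_one]; ring
  have hsplit : (∑ p ∈ ((Finset.Icc 1 n) ×ˢ (Finset.Icc 1 n)).filter (fun p => p.1 < p.2),
      (n - 2) * (n - 2))
      = (∑ p ∈ ((Finset.Icc 1 n) ×ˢ (Finset.Icc 1 n)).filter (fun p => p.1 < p.2),
          (n - 2) * (n - 3))
        + ∑ p ∈ ((Finset.Icc 1 n) ×ˢ (Finset.Icc 1 n)).filter (fun p => p.1 < p.2), (n - 2) := by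
    simp only [harith]
    rw [Finset.sum_add_distrib]
  omega

set_option maxHeartbeats 1000000 in
lemma core :
    4 * (crossings n col
        + ∑ p ∈ ((Finset.Icc 1 n) ×ˢ (Finset.Icc 1 n)).filter (fun p => p.1 < p.2),
            sDeg n col p.1 p.2 * (n - 2 - sDeg n col p.1 p.2))
      = ∑ p ∈ ((Finset.Icc 1 n) ×ˢ (Finset.Icc 1 n)).filter (fun p => p.1 < p.2),
          (n - 2) * (n - 3) := by
  have h1 : crossings n col
      + (∑ p ∈ ((Finset.Icc 1 n) ×ˢ (Finset.Icc 1 n)).filter (fun p => p.1 < p.2),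
          sDeg n col p.1 p.2 * (n - 2 - sDeg n col p.1 p.2)) = 3 * Q4 n := by
    rw [hcr, lemT]
    calc (∑ a ∈ Finset.Icc 1 n, ∑ b ∈ Finset.Icc 1 n, ∑ u ∈ Finset.Icc 1 n, ∑ v ∈ Finset.Icc 1 n,
            ind (a < b) * ind (b < u) * ind (u < v) * ind (col a u = col b v))
        + (((∑ a ∈ Finset.Icc 1 n, ∑ b ∈ Finset.Icc 1 n, ∑ u ∈ Finset.Icc 1 n, ∑ v ∈ Finset.Icc 1 n,
            ind (a < b) * ind (b < u) * ind (u < v) * (ind (col a v = col u v) * ind (¬(col b v = col u v))))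
          + (∑ a ∈ Finset.Icc 1 n, ∑ b ∈ Finset.Icc 1 n, ∑ u ∈ Finset.Icc 1 n, ∑ v ∈ Finset.Icc 1 n,
            ind (a < b) * ind (b < u) * ind (u < v) * (ind (col b v = col u v) * ind (¬(col a v = col u v)))))
          + (∑ a ∈ Finset.Icc 1 n, ∑ b ∈ Finset.Icc 1 n, ∑ u ∈ Finset.Icc 1 n, ∑ v ∈ Finset.Icc 1 n,
            ind (a < b) * ind (b < u) * ind (u < v) * ind (col a v = col b v))
          + (∑ a ∈ Finset.Icc 1 n, ∑ b ∈ Finset.Icc 1 n, ∑ u ∈ Finset.Icc 1 n, ∑ v ∈ Finset.Icc 1 n,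
            ind (a < b) * ind (b < u) * ind (u < v) * (ind (col a u = col b u) * ind (¬(col b v = col b u))))
          + (∑ a ∈ Finset.Icc 1 n, ∑ b ∈ Finset.Icc 1 n, ∑ u ∈ Finset.Icc 1 n, ∑ v ∈ Finset.Icc 1 n,
            ind (a < b) * ind (b < u) * ind (u < v) * (ind (col b v = col b u) * ind (¬(col a u = col b u))))
          + (∑ a ∈ Finset.Icc 1 n, ∑ b ∈ Finset.Icc 1 n, ∑ u ∈ Finset.Icc 1 n, ∑ v ∈ Finset.Icc 1 n,
            ind (a < b) * ind (b < u) * ind (u < v) * ind (col a v = col a u))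
          + ((∑ a ∈ Finset.Icc 1 n, ∑ b ∈ Finset.Icc 1 n, ∑ u ∈ Finset.Icc 1 n, ∑ v ∈ Finset.Icc 1 n,
            ind (a < b) * ind (b < u) * ind (u < v) * (ind (col a u = col a b) * ind (¬(col a v = col a b))))
          + (∑ a ∈ Finset.Icc 1 n, ∑ b ∈ Finset.Icc 1 n, ∑ u ∈ Finset.Icc 1 n, ∑ v ∈ Finset.Icc 1 n,
            ind (a < b) * ind (b < u) * ind (u < v) * (ind (col a v = col a b) * ind (¬(col a u = col a b))))))
        = ∑ a ∈ Finset.Icc 1 n, ∑ b ∈ Finset.Icc 1 n, ∑ u ∈ Finset.Icc 1 n, ∑ v ∈ Finset.Icc 1 n,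
            (ind (a < b) * ind (b < u) * ind (u < v) * ind (col a u = col b v)
            + (((ind (a < b) * ind (b < u) * ind (u < v) * (ind (col a v = col u v) * ind (¬(col b v = col u v)))
              + ind (a < b) * ind (b < u) * ind (u < v) * (ind (col b v = col u v) * ind (¬(col a v = col u v))))
              + ind (a < b) * ind (b < u) * ind (u < v) * ind (col a v = col b v)
              + ind (a < b) * ind (b < u) * ind (u < v) * (ind (col a u = col b u) * ind (¬(col b v = col b u)))
              + ind (a < b) * ind (b < u) * ind (u < v) * (ind (col b v = col b u) * ind (¬(col a u = col b u)))
              + ind (a < b) * ind (b < u) * ind (u < v) * ind (col a v = col a u)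
              + (ind (a < b) * ind (b < u) * ind (u < v) * (ind (col a u = col a b) * ind (¬(col a v = col a b)))
              + ind (a < b) * ind (b < u) * ind (u < v) * (ind (col a v = col a b) * ind (¬(col a u = col a b))))))) := by
          simp only [Finset.sum_add_distrib]
      _ = ∑ a ∈ Finset.Icc 1 n, ∑ b ∈ Finset.Icc 1 n, ∑ u ∈ Finset.Icc 1 n, ∑ v ∈ Finset.Icc 1 n,
            3 * (ind (a < b) * ind (b < u) * ind (u < v)) := by
          refine Finset.sum_congr rfl fun a _ => Finset.sum_congr rfl fun b _ =>
            Finset.sum_congr rfl fun u _ => Finset.sum_congr rfl fun v _ => ?_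
          linarith [pw3 col a b u v]
      _ = 3 * Q4 n := by
          unfold Q4
          simp only [Finset.mul_sum]
  have h2 := hall n
  omega

end Core
section Counting
variable (n : ℕ) (col : ℕ → ℕ → Bool)

lemma card_S :
    (((Finset.Icc 1 n) ×ˢ (Finset.Icc 1 n)).filter (fun p => p.1 < p.2)).card = n.choose 2 := by
  rw [Finset.card_eq_sum_ones, sum_S n (fun _ _ => 1)]
  have step1 : ∀ i ∈ Finset.Icc 1 n, (∑ j ∈ Finset.Icc 1 n, ind (i < j) * 1) = n - i := by
    intro i hi
    simp only [mul_one]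
    unfold ind
    rw [← Finset.card_filter, filter_gt_eq i (Finset.mem_Icc.mp hi).1]
    exact Nat.card_Ioc i n
  rw [Finset.sum_congr rfl step1]
  have step2 : (∑ i ∈ Finset.Icc 1 n, (n - i)) = ∑ k ∈ Finset.range n, k := by
    refine Finset.sum_nbij' (fun i => n - i) (fun k => n - k) ?_ ?_ ?_ ?_ ?_ <;>
      intros a ha <;> simp only [Finset.mem_Icc, Finset.mem_range] at * <;> omega
  rw [step2]
  have hg := Finset.sum_range_id_mul_two n
  have hc : n.choose 2 = n * (n - 1) / 2 := Nat.choose_two_right n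
  omega

lemma Ek_eq (k : ℕ) :
    Ek n col k = ∑ p ∈ ((Finset.Icc 1 n) ×ˢ (Finset.Icc 1 n)).filter (fun p => p.1 < p.2),
      ind (kVal n col p.1 p.2 = k) := by
  unfold Ek
  rw [Finset.card_filter, Finset.sum_filter]
  refine Finset.sum_congr rfl fun p _ => ?_
  by_cases h1 : p.1 < p.2 <;> by_cases h2 : kVal n col p.1 p.2 = k <;> simp [ind, h1, h2]

lemma Eleq_eq (k : ℕ) :
    Eleq n col k = ∑ p ∈ ((Finset.Icc 1 n) ×ˢ (Finset.Icc 1 n)).filter (fun p => p.1 < p.2),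
      ind (kVal n col p.1 p.2 ≤ k) := by
  unfold Eleq
  rw [Finset.sum_congr rfl fun j _ => Ek_eq n col j, Finset.sum_comm]
  refine Finset.sum_congr rfl fun p _ => ?_
  unfold ind
  rw [Finset.sum_ite_eq (Finset.range (k + 1)) (kVal n col p.1 p.2) (fun _ => 1)]
  simp [Finset.mem_range, Nat.lt_succ_iff]

lemma cnt_ind (m K : ℕ) : (∑ j ∈ Finset.range K, ind (m ≤ j)) = K - m := by
  unfold ind
  rw [← Finset.card_filter]
  have h : (Finset.range K).filter (fun j => m ≤ j) = Finset.Ico m K := by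
    ext x; simp only [Finset.mem_filter, Finset.mem_range, Finset.mem_Ico]; omega
  rw [h, Nat.card_Ico]

lemma Eleqleq_eq (k : ℕ) :
    Eleqleq n col k = ∑ p ∈ ((Finset.Icc 1 n) ×ˢ (Finset.Icc 1 n)).filter (fun p => p.1 < p.2),
      ((k + 1) - kVal n col p.1 p.2) := by
  unfold Eleqleq
  rw [Finset.sum_congr rfl fun j _ => Eleq_eq n col j, Finset.sum_comm]
  exact Finset.sum_congr rfl fun p _ => cnt_ind _ _

end Counting

lemma tsumQ (m : ℕ) (K : ℕ) : (∑ k ∈ Finset.range K, ((k + 1 - m : ℕ) : ℚ))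
    = ((K - m : ℕ) : ℚ) * (((K - m : ℕ) : ℚ) + 1) / 2 := by
  induction K with
  | zero => simp
  | succ K ih =>
    rw [Finset.sum_range_succ, ih]
    rcases le_or_gt m K with h | h
    · have h1 : K + 1 - m = (K - m) + 1 := by omega
      rw [h1]
      push_cast
      ring
    · have h0 : K - m = 0 := by omega
      have h1 : K + 1 - m = 0 := by omega
      rw [h0, h1]
      simp
lemma scalar (n : ℕ) (hn : 3 ≤ n) (s t : ℕ) (hst : s + t = n - 2) :
    2 * (∑ k ∈ Finset.range (n / 2 - 1), ((k + 1 - min s t : ℕ) : ℚ))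
      - (1 / 2) * (((n - 2) / 2 : ℕ) : ℚ)
      - (1 / 2) * (1 + (-1 : ℚ) ^ n) * ((n / 2 - 2 + 1 - min s t : ℕ) : ℚ)
    = (((n - 2) * (n - 3) : ℕ) : ℚ) / 4 - ((s * t : ℕ) : ℚ) := by
  rw [tsumQ]
  have hms : min s t ≤ s := min_le_left s t
  have hmt : min s t ≤ t := min_le_right s t
  set m := min s t with hm
  have hst' : s * t = m * ((n - 2) - m) := by
    rcases le_total s t with h | h
    · have h1 : m = s := by rw [hm, min_eq_left h]
      have h2 : t = (n - 2) - m := by omega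
      rw [h2, ← h1]
    · have h1 : m = t := by rw [hm, min_eq_right h]
      have h2 : s = (n - 2) - m := by omega
      rw [h2, ← h1]
      ring
  have c3 : (((n - 2) * (n - 3) : ℕ) : ℚ) = ((n : ℚ) - 2) * ((n : ℚ) - 3) := by
    push_cast [Nat.cast_sub (by omega : 2 ≤ n), Nat.cast_sub (by omega : 3 ≤ n)]
    ring
  have c4 : ((s * t : ℕ) : ℚ) = (m : ℚ) * ((n : ℚ) - 2 - m) := by
    rw [hst']
    push_cast [Nat.cast_sub (by omega : m ≤ n - 2), Nat.cast_sub (by omega : 2 ≤ n)]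
    ring
  rcases Nat.even_or_odd n with he | ho
  · obtain ⟨r, hr⟩ := he
    have hr2 : 2 ≤ r := by omega
    have hmle : m ≤ r - 1 := by omega
    have hn2 : n / 2 = r := by omega
    have hd : (n - 2) / 2 = r - 1 := by omega
    have hpow : (-1 : ℚ) ^ n = 1 := Even.neg_one_pow ⟨r, hr⟩
    rw [hn2, hd, hpow]
    have c1 : ((r - 1 - m : ℕ) : ℚ) = (r : ℚ) - 1 - m := by
      rw [Nat.cast_sub hmle, Nat.cast_sub (by omega : 1 ≤ r)]
      push_cast; ring
    have c2 : ((r - 2 + 1 - m : ℕ) : ℚ) = (r : ℚ) - 1 - m := by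
      have h : r - 2 + 1 - m = r - 1 - m := by omega
      rw [h]; exact c1
    have c5 : ((r - 1 : ℕ) : ℚ) = (r : ℚ) - 1 := by
      rw [Nat.cast_sub (by omega : 1 ≤ r)]; push_cast; ring
    have cn : (n : ℚ) = 2 * r := by
      have := congrArg (Nat.cast : ℕ → ℚ) hr
      push_cast at this
      linarith
    rw [c1, c2, c3, c4, c5, cn]
    ring
  · obtain ⟨r, hr⟩ := ho
    have hr1 : 1 ≤ r := by omega
    have hmle : m ≤ r - 1 := by omega
    have hn2 : n / 2 = r := by omega
    have hd : (n - 2) / 2 = r - 1 := by omega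
    have hpow : (-1 : ℚ) ^ n = -1 := Odd.neg_one_pow ⟨r, hr⟩
    rw [hn2, hd, hpow]
    have c1 : ((r - 1 - m : ℕ) : ℚ) = (r : ℚ) - 1 - m := by
      rw [Nat.cast_sub hmle, Nat.cast_sub (by omega : 1 ≤ r)]
      push_cast; ring
    have c5 : ((r - 1 : ℕ) : ℚ) = (r : ℚ) - 1 := by
      rw [Nat.cast_sub (by omega : 1 ≤ r)]; push_cast; ring
    have cn : (n : ℚ) = 2 * r + 1 := by
      have := congrArg (Nat.cast : ℕ → ℚ) hr
      push_cast at this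
      linarith
    rw [c1, c3, c4, c5, cn]
    ring
set_option maxHeartbeats 1000000 in
theorem main_aux (n : ℕ) (hn : 3 ≤ n) (col : ℕ → ℕ → Bool) :
    (crossings n col : ℚ) =
      2 * ∑ k ∈ Finset.range (n / 2 - 1), (Eleqleq n col k : ℚ)
        - (1 / 2) * (n.choose 2 : ℚ) * (((n - 2) / 2 : ℕ) : ℚ)
        - (1 / 2) * (1 + (-1 : ℚ) ^ n) * (Eleqleq n col (n / 2 - 2) : ℚ) := by
  have hE : ∀ k : ℕ, ((Eleqleq n col k : ℕ) : ℚ)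
      = ∑ p ∈ ((Finset.Icc 1 n) ×ˢ (Finset.Icc 1 n)).filter (fun p => p.1 < p.2),
          ((k + 1 - kVal n col p.1 p.2 : ℕ) : ℚ) := by
    intro k
    rw [Eleqleq_eq]
    exact Nat.cast_sum _ _
  have hbounds : ∀ p ∈ ((Finset.Icc 1 n) ×ˢ (Finset.Icc 1 n)).filter
      (fun p : ℕ × ℕ => p.1 < p.2),
      sDeg n col p.1 p.2 + (n - 2 - sDeg n col p.1 p.2) = n - 2 := by
    intro p hp
    obtain ⟨hmem, hlt⟩ := Finset.mem_filter.mp hp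
    obtain ⟨h1, h2⟩ := Finset.mem_product.mp hmem
    have := sDeg_le col (Finset.mem_Icc.mp h1).1 hlt (Finset.mem_Icc.mp h2).2
    omega
  have hR : 2 * ∑ k ∈ Finset.range (n / 2 - 1), ((Eleqleq n col k : ℕ) : ℚ)
        - (1 / 2) * ((n.choose 2 : ℕ) : ℚ) * (((n - 2) / 2 : ℕ) : ℚ)
        - (1 / 2) * (1 + (-1 : ℚ) ^ n) * ((Eleqleq n col (n / 2 - 2) : ℕ) : ℚ)
      = (crossings n col : ℚ) := by
    calc 2 * ∑ k ∈ Finset.range (n / 2 - 1), ((Eleqleq n col k : ℕ) : ℚ)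
        - (1 / 2) * ((n.choose 2 : ℕ) : ℚ) * (((n - 2) / 2 : ℕ) : ℚ)
        - (1 / 2) * (1 + (-1 : ℚ) ^ n) * ((Eleqleq n col (n / 2 - 2) : ℕ) : ℚ)
        = ∑ p ∈ ((Finset.Icc 1 n) ×ˢ (Finset.Icc 1 n)).filter (fun p => p.1 < p.2),
            (2 * (∑ k ∈ Finset.range (n / 2 - 1), ((k + 1 - kVal n col p.1 p.2 : ℕ) : ℚ))
              - (1 / 2) * (((n - 2) / 2 : ℕ) : ℚ)
              - (1 / 2) * (1 + (-1 : ℚ) ^ n) * ((n / 2 - 2 + 1 - kVal n col p.1 p.2 : ℕ) : ℚ)) := by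
          rw [Finset.sum_sub_distrib, Finset.sum_sub_distrib]
          congr 1
          · congr 1
            · rw [← Finset.mul_sum]
              congr 1
              rw [Finset.sum_congr rfl (fun k _ => hE k), Finset.sum_comm]
            · rw [Finset.sum_const, nsmul_eq_mul, card_S]
              ring
          · rw [← Finset.mul_sum, hE (n / 2 - 2)]
      _ = ∑ p ∈ ((Finset.Icc 1 n) ×ˢ (Finset.Icc 1 n)).filter (fun p => p.1 < p.2),
            ((((n - 2) * (n - 3) : ℕ) : ℚ) / 4
              - ((sDeg n col p.1 p.2 * (n - 2 - sDeg n col p.1 p.2) : ℕ) : ℚ)) := by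
          refine Finset.sum_congr rfl fun p hp => ?_
          have h := scalar n hn (sDeg n col p.1 p.2) (n - 2 - sDeg n col p.1 p.2) (hbounds p hp)
          unfold kVal
          exact h
      _ = (crossings n col : ℚ) := by
          rw [Finset.sum_sub_distrib, ← Finset.sum_div, ← Nat.cast_sum, ← Nat.cast_sum,
            ← core n col]
          push_cast
          ring
  exact hR.symm


/-- For `n ≥ 3`,
`cr(c) = 2 Σ_{k=0}^{⌊n/2⌋−2} E_{≤≤k}(c) − (1/2) C(n,2) ⌊(n−2)/2⌋ − (1/2)(1+(−1)^n) E_{≤≤⌊n/2⌋−2}(c)`. -/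
theorem crossings_eq_leleq_identity (n : ℕ) (hn : 3 ≤ n) (c : ℕ → ℕ → Bool) :
    (crossings n c : ℚ) =
      2 * ∑ k ∈ Finset.range (n / 2 - 1), (Eleqleq n c k : ℚ)
        - (1 / 2) * (n.choose 2 : ℚ) * (((n - 2) / 2 : ℕ) : ℚ)
        - (1 / 2) * (1 + (-1 : ℚ) ^ n) * (Eleqleq n c (n / 2 - 2) : ℚ) := by
  exact main_aux n hn c
end

section
/- For every integer n ≥ 4, every 2-coloring c of the pairs (i,j) with 1 ≤ i < j ≤ n, and every integer k with 0 ≤ k ≤ ⌊n/2⌋−2, the identity E_{≤≤k}(c) = E_{≤≤k−1}(c₁) + 2·binom(k+2,2) + E_{≤k}(c,c₁) holds, where c₁ is the restriction of c to the pairs (i,j) with 1 ≤ i < j ≤ n−1. -/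
/-! Write `E_{≤≤k}(c) = ∑_e (k + 1 - κ(e))₊` over all edges `e`, where `κ(e)` is the `k`-value
of `e`, and split the sum into the edges of `K_{n-1}` and the edges `(i, n)`. Deleting vertex `n`
lowers `s(i, j)` by at most one and so changes `κ` by `0` or `-1`: an edge of `K_{n-1}`
contributes `(k - κ₁(e))₊`, plus one exactly when it is a `(c, c₁)`-invariant `(≤ k)`-edge.
For the edges `(i, n)`, `s(i, n)` counts the earlier vertices of the same colour at `n`, so
within each colour class it runs through `0, 1, 2, …`; since `2k + 4 ≤ n`, the two classes
together contribute `2 (1 + 2 + ⋯ + (k + 1)) = 2·C(k + 2, 2)`. -/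

open Finset

def completeEdges (n : ℕ) : Finset (ℕ × ℕ) :=
  ((Icc 1 n) ×ˢ (Icc 1 n)).filter (fun p => p.1 < p.2)

theorem sum_range_boole_le (v m : ℕ) :
    ∑ j ∈ range m, (if v ≤ j then 1 else 0) = m - v := by
  have hfilter : (range m).filter (v ≤ ·) = Ico v m := by
    ext; simp only [mem_filter, mem_range, mem_Ico]; omega
  rw [sum_boole, Nat.cast_id, hfilter, Nat.card_Ico]

theorem Eleq_eq_sum (n : ℕ) (c : ℕ → ℕ → Bool) (j : ℕ) :
    Eleq n c j = ∑ p ∈ completeEdges n, if kVal n c p.1 p.2 ≤ j then 1 else 0 := by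
  have hEk : ∀ j', Ek n c j' = ∑ p ∈ completeEdges n, if kVal n c p.1 p.2 = j' then 1 else 0 := by
    intro j'
    rw [completeEdges, ← card_filter, filter_filter]
    rfl
  simp only [Eleq, hEk]
  rw [sum_comm]
  refine sum_congr rfl fun p _ => ?_
  simp only [sum_ite_eq, mem_range, Nat.lt_succ_iff]

theorem sum_range_Eleq (n : ℕ) (c : ℕ → ℕ → Bool) (m : ℕ) :
    ∑ j ∈ range m, Eleq n c j = ∑ p ∈ completeEdges n, (m - kVal n c p.1 p.2) := by
  simp only [Eleq_eq_sum]
  rw [sum_comm]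
  exact sum_congr rfl fun p _ => sum_range_boole_le _ _

theorem completeEdges_succ (n : ℕ) :
    completeEdges (n + 1) = completeEdges n ∪ (Icc 1 n).image (·, n + 1) := by
  ext ⟨i, j⟩
  simp only [completeEdges, mem_union, mem_filter, mem_product, mem_Icc, mem_image,
    Prod.mk.injEq]
  constructor
  · intro h
    by_cases hj : j = n + 1
    · exact Or.inr ⟨i, by omega, rfl, hj.symm⟩
    · exact Or.inl (by omega)
  · rintro (h | ⟨a, ha, rfl, rfl⟩) <;> omega

theorem sum_completeEdges_succ {M : Type*} [AddCommMonoid M] (n : ℕ) (F : ℕ × ℕ → M) :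
    ∑ p ∈ completeEdges (n + 1), F p =
      ∑ p ∈ completeEdges n, F p + ∑ i ∈ Icc 1 n, F (i, n + 1) := by
  have hdisj : Disjoint (completeEdges n) ((Icc 1 n).image (·, n + 1)) := by
    simp only [disjoint_left, completeEdges, mem_filter, mem_product, mem_Icc, mem_image]
    rintro _ h ⟨a, _, rfl⟩
    omega
  rw [completeEdges_succ, sum_union hdisj, sum_image fun _ _ _ _ h => (Prod.ext_iff.1 h).1]

theorem sDeg_succ (n : ℕ) (c : ℕ → ℕ → Bool) {i j : ℕ} (hj : j ≤ n) :
    sDeg (n + 1) c i j = sDeg n c i j + if c i (n + 1) = c i j then 1 else 0 := by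
  have hIoc : Ioc j (n + 1) = insert (n + 1) (Ioc j n) := by
    ext l; simp only [mem_Ioc, mem_insert]; omega
  have hnot : n + 1 ∉ (Ioc j n).filter (fun l => c i l = c i j) := by
    simp only [mem_filter, mem_Ioc]; omega
  rw [sDeg, sDeg, hIoc, filter_insert]
  split
  · rw [card_insert_of_notMem hnot]; omega
  · omega

theorem tsub_kVal_succ (n k : ℕ) (c : ℕ → ℕ → Bool) {i j : ℕ} (hj : j ≤ n) :
    k + 1 - kVal (n + 1) c i j = (k - kVal n c i j) +
      if kVal (n + 1) c i j = kVal n c i j ∧ kVal (n + 1) c i j ≤ k then 1 else 0 := by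
  rw [kVal, kVal, sDeg_succ n c hj]
  split_ifs <;> omega

theorem EleqInv_eq_sum (n k : ℕ) (c : ℕ → ℕ → Bool) :
    EleqInv n c k = ∑ p ∈ completeEdges (n - 1),
      if kVal n c p.1 p.2 = kVal (n - 1) c p.1 p.2 ∧ kVal n c p.1 p.2 ≤ k then 1 else 0 := by
  rw [completeEdges, ← card_filter, filter_filter]
  rfl

theorem sum_card_filter_lt {M : Type*} [AddCommMonoid M] (g : ℕ → M) (B : Finset ℕ) :
    ∑ i ∈ B, g #(B.filter (· < i)) = ∑ t ∈ range #B, g t := by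
  induction B using Finset.induction_on_max with
  | empty => simp
  | insert a s ha ih =>
    have hna : a ∉ s := fun h => lt_irrefl a (ha a h)
    have hrank_a : (insert a s).filter (· < a) = s := by
      rw [filter_insert, if_neg (lt_irrefl a)]
      exact filter_true_of_mem ha
    have hrank_s : ∀ i ∈ s, (insert a s).filter (· < i) = s.filter (· < i) := fun i hi => by
      rw [filter_insert, if_neg (ha i hi).not_gt]
    rw [sum_insert hna, card_insert_of_notMem hna, sum_range_succ, hrank_a,
      sum_congr rfl fun i hi => by rw [hrank_s i hi], ih, add_comm]

theorem sDeg_last_eq_card_filter (m : ℕ) (c : ℕ → ℕ → Bool) {b : Bool} {i : ℕ}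
    (hi : i ∈ (Icc 1 m).filter (c · (m + 1) = b)) :
    sDeg (m + 1) c i (m + 1) = #(((Icc 1 m).filter (c · (m + 1) = b)).filter (· < i)) := by
  simp only [mem_filter, mem_Icc] at hi
  rw [sDeg, Ioc_self, filter_empty, card_empty, add_zero, filter_filter, hi.2]
  congr 1
  ext l
  simp only [mem_filter, mem_Ico, mem_Icc]
  exact ⟨fun ⟨⟨h1, h2⟩, h3⟩ => ⟨⟨h1, by omega⟩, h3, h2⟩, fun ⟨⟨h1, _⟩, h3, h4⟩ => ⟨⟨h1, h4⟩, h3⟩⟩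

theorem sum_Icc_sDeg_last {M : Type*} [AddCommMonoid M] (m : ℕ) (c : ℕ → ℕ → Bool)
    (g : ℕ → M) :
    ∑ i ∈ Icc 1 m, g (sDeg (m + 1) c i (m + 1)) =
      ∑ b : Bool, ∑ t ∈ range #((Icc 1 m).filter (c · (m + 1) = b)), g t := by
  rw [← sum_fiberwise (Icc 1 m) (c · (m + 1))]
  refine sum_congr rfl fun b _ => ?_
  rw [← sum_card_filter_lt]
  exact sum_congr rfl fun i hi => by rw [sDeg_last_eq_card_filter m c hi]

theorem sum_range_add_sum_range_reflect {M : Type*} [AddCommMonoid M] (g : ℕ → M) (a d : ℕ) :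
    ∑ t ∈ range a, g t + ∑ t ∈ range d, g (a + d - 1 - t) = ∑ t ∈ range (a + d), g t := by
  rw [sum_range_add, ← sum_range_reflect (fun t => g (a + t)) d]
  congr 1
  exact sum_congr rfl fun t ht => by rw [mem_range] at ht; congr 1; omega

theorem sum_range_tsub_eq_choose {K N : ℕ} (h : K ≤ N) :
    ∑ t ∈ range N, (K - t) = (K + 1).choose 2 := by
  obtain ⟨d, rfl⟩ := Nat.exists_eq_add_of_le h
  rw [sum_range_add, sum_eq_zero (s := range d) fun t _ => by omega, add_zero,
    ← sum_range_reflect, Nat.choose_two_right, ← sum_range_id, sum_range_succ', add_zero]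
  exact sum_congr rfl fun t ht => by rw [mem_range] at ht; omega

theorem sum_range_tsub_min_add (k b r n : ℕ) (hn : b + r + 1 = n) (hk : 2 * k + 4 ≤ n) :
    ∑ t ∈ range b, (k + 1 - min t (n - 2 - t)) + ∑ t ∈ range r, (k + 1 - min t (n - 2 - t)) =
      2 * (k + 2).choose 2 := by
  -- for `2k + 4 ≤ n` at most one of `t`, `n - 2 - t` is `≤ k`
  have hsplit : ∀ a, a + 1 ≤ n → ∑ t ∈ range a, (k + 1 - min t (n - 2 - t)) =
      ∑ t ∈ range a, (k + 1 - t) + ∑ t ∈ range a, (k + 1 - (n - 2 - t)) := fun a ha => by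
    rw [← sum_add_distrib]
    exact sum_congr rfl fun t ht => by rw [mem_range] at ht; omega
  have hfold : ∀ a d, a + d + 1 = n → ∑ t ∈ range a, (k + 1 - t) +
      ∑ t ∈ range d, (k + 1 - (n - 2 - t)) = ∑ t ∈ range (n - 1), (k + 1 - t) := by
    rintro a d rfl
    rw [show a + d + 1 - 1 = a + d by omega, ← sum_range_add_sum_range_reflect]
    congr 1
  have hbr := hfold b r hn
  have hrb := hfold r b (by omega)
  rw [sum_range_tsub_eq_choose (K := k + 1) (N := n - 1) (by omega),
    show k + 1 + 1 = k + 2 from rfl] at hbr hrb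
  rw [hsplit b (by omega), hsplit r (by omega)]
  omega

theorem sum_tsub_kVal_last (m k : ℕ) (c : ℕ → ℕ → Bool) (hk : 2 * k + 3 ≤ m) :
    ∑ i ∈ Icc 1 m, (k + 1 - kVal (m + 1) c i (m + 1)) = 2 * (k + 2).choose 2 := by
  have hcard : #((Icc 1 m).filter (c · (m + 1) = true)) +
      #((Icc 1 m).filter (c · (m + 1) = false)) = m := by
    rw [← Fintype.sum_bool (fun b => #((Icc 1 m).filter (c · (m + 1) = b))),
      ← card_eq_sum_card_fiberwise fun _ _ => mem_coe.2 (mem_univ _), Nat.card_Icc,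
      Nat.add_sub_cancel]
  simp only [kVal]
  rw [sum_Icc_sDeg_last m c (fun s => k + 1 - min s (m + 1 - 2 - s)), Fintype.sum_bool]
  exact sum_range_tsub_min_add k _ _ (m + 1) (by omega) (by omega)

/-- For `n ≥ 4` and `0 ≤ k ≤ ⌊n/2⌋−2`,
`E_{≤≤k}(c) = E_{≤≤k−1}(c₁) + 2·C(k+2,2) + E_{≤k}(c,c₁)`, where `c₁` is the
restriction of `c` to the pairs with `j ≤ n−1` (here `E_{≤≤k−1}(c₁) = Σ_{j=0}^{k-1} E_{≤j}(c₁)`). -/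
theorem Eleqleq_recursion (n k : ℕ) (hn : 4 ≤ n) (hk : k ≤ n / 2 - 2)
    (c : ℕ → ℕ → Bool) :
    Eleqleq n c k =
      (∑ j ∈ Finset.range k, Eleq (n - 1) c j) + 2 * (k + 2).choose 2 + EleqInv n c k := by
  obtain ⟨m, rfl⟩ : ∃ m, n = m + 1 := ⟨n - 1, by omega⟩
  rw [Eleqleq, sum_range_Eleq, sum_completeEdges_succ, sum_tsub_kVal_last m k c (by omega),
    sum_range_Eleq, EleqInv_eq_sum, Nat.add_sub_cancel, add_right_comm, ← sum_add_distrib]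
  congr 1
  refine sum_congr rfl fun p hp => tsub_kVal_succ m k c ?_
  simp only [completeEdges, mem_filter, mem_product, mem_Icc] at hp
  omega
end
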